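/- Let n, m ≥ 3 be odd integers and let G = Dₙ ×_Q Dₘ be a fibre product of the dihedral groups Dₙ and Dₘ over a common quotient Q. Then either G ≅ Dₙ × Dₘ, or G is isomorphic to a generalized dihedral group D(A) where A is a subgroup of Cₙ × Cₘ (a direct product of at most two cyclic groups). -/

import Mathlib

/-- The action of `C₂` on an abelian group `A` by inversion. -/
def C2toAut (A : Type*) [CommGroup A] : Multiplicative (ZMod 2) →* MulAut A :=
  MonoidHom.mk' (fun z => if z = 1 then 1 else MulEquiv.inv A) (by
    have h2 : MulEquiv.inv A * MulEquiv.inv A = 1 := by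
      ext a
      simp
    have hall : ∀ z : Multiplicative (ZMod 2), z = 1 ∨ z = Multiplicative.ofAdd 1 := by decide
    have hg : (Multiplicative.ofAdd (1 : ZMod 2)) ≠ 1 := by decide
    have hgg : (Multiplicative.ofAdd (1 : ZMod 2)) * Multiplicative.ofAdd (1 : ZMod 2) = 1 := by
      decide
    intro x y
    rcases hall x with rfl | rfl <;> rcases hall y with rfl | rfl <;>
      simp [hg, hgg, h2])

/-- The generalized dihedral group `D(A) = A ⋊ C₂`, with `C₂` acting by inversion. -/
abbrev GeneralizedDihedral (A : Type*) [CommGroup A] :=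
  A ⋊[C2toAut A] Multiplicative (ZMod 2)

/-!
In `Dₖ` with `k` odd, a homomorphism that kills one reflection kills everything, since every
rotation is then identified with the image of a reflection and has order dividing both `2` and
`k`. Hence, if `Q` is nontrivial, an element of odd order in `Q` is never the image of a
reflection, so the fibre product contains no mixed pairs (rotation, reflection): it consists of
the rotation pairs in it, an abelian subgroup `A ≤ Cₙ × Cₘ`, together with the coset `A σ` of a
reflection pair `σ`, which is an involution inverting `A`. This is the presentation of `D(A)`.
If `Q` is trivial the fibre product is all of `Dₙ × Dₘ`.
-/

theorem eq_one_of_pow_two_eq_one_of_pow_odd {M : Type*} [Monoid M] {x : M} {k : ℕ} (hk : Odd k)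
    (h2 : x ^ 2 = 1) (hk' : x ^ k = 1) : x = 1 := by
  have := pow_gcd_eq_one.2 ⟨h2, hk'⟩
  rwa [Nat.coprime_two_left.2 hk, pow_one] at this

namespace DihedralGroup

variable {k : ℕ}

theorem r_pow_self (i : ZMod k) : r i ^ k = 1 := by
  rw [r_pow, ZMod.natCast_self, mul_zero, r_zero]

theorem sr_mul_r_mul_sr (c i : ZMod k) : sr c * r i * sr c = r (-i) := by
  rw [sr_mul_r, sr_mul_sr]
  ring_nf

theorem eq_one_of_map_sr_eq_one {Q : Type*} [Group Q] (hk : Odd k) {φ : DihedralGroup k →* Q}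
    {b : ZMod k} (hb : φ (sr b) = 1) : φ = 1 := by
  have hr : ∀ i, φ (r i) = 1 := fun i => by
    refine eq_one_of_pow_two_eq_one_of_pow_odd hk ?_ (by rw [← map_pow, r_pow_self, map_one])
    have h : φ (sr (b + i)) = φ (r i) := by
      rw [← one_mul (φ (sr _)), ← hb, ← map_mul, sr_mul_sr, add_sub_cancel_left]
    rw [← h, ← map_pow, sq, sr_mul_self, map_one]
  ext (i | i)
  · exact hr i
  · rw [show sr i = sr b * r (i - b) by rw [sr_mul_r, add_sub_cancel], map_mul, hb, hr, one_mul,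
      MonoidHom.one_apply]

theorem map_sr_ne_of_pow_odd_eq_one {Q : Type*} [Group Q] [Nontrivial Q] (hk : Odd k)
    {φ : DihedralGroup k →* Q} (hφ : Function.Surjective φ) {q : Q} {n : ℕ} (hn : Odd n)
    (hq : q ^ n = 1) (b : ZMod k) : φ (sr b) ≠ q := by
  rintro rfl
  have hφ1 : φ = 1 := eq_one_of_map_sr_eq_one hk <|
    eq_one_of_pow_two_eq_one_of_pow_odd hn (by rw [← map_pow, sq, sr_mul_self, map_one]) hq
  obtain ⟨q, hq1⟩ := exists_ne (1 : Q)
  obtain ⟨g, rfl⟩ := hφ q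
  exact hq1 (by rw [hφ1, MonoidHom.one_apply])

variable (k) in
def rotationHom : Multiplicative (ZMod k) →* DihedralGroup k where
  toFun x := r x.toAdd
  map_one' := rfl
  map_mul' _ _ := (r_mul_r _ _).symm

theorem rotationHom_injective : Function.Injective (rotationHom k) :=
  fun _ _ h => r.inj h

end DihedralGroup

namespace GeneralizedDihedral

variable {A H : Type*} [CommGroup A] [Group H]

theorem C2_eq_one_or_eq_ofAdd_one (z : Multiplicative (ZMod 2)) : z = 1 ∨ z = .ofAdd 1 := by
  revert z; decide

def involutionHom (σ : H) (hσ : σ * σ = 1) : Multiplicative (ZMod 2) →* H where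
  toFun z := σ ^ z.toAdd.val
  map_one' := pow_zero σ
  map_mul' a b := by
    rw [toAdd_mul, ZMod.val_add, ← pow_eq_pow_mod _ (by rwa [sq]), pow_add]

theorem involutionHom_ofAdd_one (σ : H) (hσ : σ * σ = 1) : involutionHom σ hσ (.ofAdd 1) = σ :=
  pow_one σ

theorem C2toAut_ofAdd_one : C2toAut A (.ofAdd 1) = MulEquiv.inv A := by
  simp [C2toAut]

variable (ι : A →* H) (σ : H) (hσ : σ * σ = 1) (hι : ∀ a, σ * ι a * σ = (ι a)⁻¹)

def lift : GeneralizedDihedral A →* H :=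
  SemidirectProduct.lift ι (involutionHom σ hσ) fun z => by
    rcases C2_eq_one_or_eq_ofAdd_one z with rfl | rfl <;> ext a
    · simp
    · have hσ' : σ⁻¹ = σ := inv_eq_of_mul_eq_one_right hσ
      simp [C2toAut_ofAdd_one, involutionHom_ofAdd_one, hσ', hι]

theorem lift_bijective (hinj : Function.Injective ι) (hσι : σ ∉ ι.range)
    (hcover : ∀ h, h ∈ ι.range ∨ h * σ ∈ ι.range) : Function.Bijective (lift ι σ hσ hι) := by
  refine ⟨(injective_iff_map_eq_one _).2 ?_, fun h => ?_⟩
  · rintro ⟨a, z⟩ h1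
    change ι a * involutionHom σ hσ z = 1 at h1
    rcases C2_eq_one_or_eq_ofAdd_one z with rfl | rfl
    · rw [map_one, mul_one, ← map_one ι] at h1
      rw [hinj h1]
      rfl
    · rw [involutionHom_ofAdd_one, mul_eq_one_iff_eq_inv', ← map_inv] at h1
      exact absurd ⟨a⁻¹, h1.symm⟩ hσι
  · rcases hcover h with ⟨a, rfl⟩ | ⟨a, ha⟩
    · exact ⟨.inl a, SemidirectProduct.lift_inl ..⟩
    · refine ⟨⟨a, .ofAdd 1⟩, ?_⟩
      change ι a * involutionHom σ hσ (.ofAdd 1) = h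
      rw [involutionHom_ofAdd_one, ha, mul_assoc, hσ, mul_one]

end GeneralizedDihedral

namespace DihedralGroup

variable {n m : ℕ}

theorem nonempty_mulEquiv_generalizedDihedral {G : Subgroup (DihedralGroup n × DihedralGroup m)}
    {b₀ : ZMod m} (hσ : (sr 0, sr b₀) ∈ G) (hrs : ∀ a b, (r a, sr b) ∉ G)
    (hsr : ∀ a b, (sr a, r b) ∉ G) :
    Nonempty (G ≃* GeneralizedDihedral (G.comap ((rotationHom n).prodMap (rotationHom m)))) := by
  set ρ := (rotationHom n).prodMap (rotationHom m)
  let σ : G := ⟨_, hσ⟩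
  have hinj : Function.Injective (ρ.subgroupComap G) := fun _ _ h =>
    Subtype.ext (rotationHom_injective.prodMap rotationHom_injective (congrArg Subtype.val h))
  have hσσ : σ * σ = 1 := Subtype.ext (Prod.ext (sr_mul_self _) (sr_mul_self _))
  have hconj : ∀ a, σ * ρ.subgroupComap G a * σ = (ρ.subgroupComap G a)⁻¹ := fun _ =>
    Subtype.ext (Prod.ext ((sr_mul_r_mul_sr _ _).trans (inv_r _).symm)
      ((sr_mul_r_mul_sr _ _).trans (inv_r _).symm))
  have hσι : σ ∉ (ρ.subgroupComap G).range := by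
    rintro ⟨a, ha⟩
    cases congrArg (·.1.1) ha
  have hcover : ∀ g, g ∈ (ρ.subgroupComap G).range ∨ g * σ ∈ (ρ.subgroupComap G).range := by
    rintro ⟨⟨g₁ | g₁, g₂ | g₂⟩, hg⟩
    · exact .inl ⟨⟨(.ofAdd g₁, .ofAdd g₂), hg⟩, rfl⟩
    · exact absurd hg (hrs _ _)
    · exact absurd hg (hsr _ _)
    -- `(sr g₁, sr g₂) * σ = (r (0 - g₁), r (b₀ - g₂))` holds by `sr_mul_sr`, definitionally
    · exact .inr ⟨⟨(.ofAdd (0 - g₁), .ofAdd (b₀ - g₂)), mul_mem hg hσ⟩, rfl⟩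
  exact ⟨(MulEquiv.ofBijective _
    (GeneralizedDihedral.lift_bijective _ σ hσσ hconj hinj hσι hcover)).symm⟩

end DihedralGroup

open DihedralGroup

theorem fibre_product_of_odd_dihedrals_general (n m : ℕ) (hn : Odd n) (hm : Odd m)
    {Q : Type*} [Group Q]
    (α : DihedralGroup n →* Q) (β : DihedralGroup m →* Q)
    (hα : Function.Surjective α) (hβ : Function.Surjective β)
    (G : Subgroup (DihedralGroup n × DihedralGroup m))
    (hG : ∀ p : DihedralGroup n × DihedralGroup m, p ∈ G ↔ α p.1 = β p.2) :
    Nonempty (G ≃* DihedralGroup n × DihedralGroup m) ∨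
    ∃ A : Subgroup (Multiplicative (ZMod n) × Multiplicative (ZMod m)),
      Nonempty (G ≃* GeneralizedDihedral A) := by
  rcases subsingleton_or_nontrivial Q with hQ | hQ
  · have hGtop : G = ⊤ := eq_top_iff.2 fun p _ => (hG p).2 (Subsingleton.elim _ _)
    exact .inl ⟨(MulEquiv.subgroupCongr hGtop).trans Subgroup.topEquiv⟩
  have hrs : ∀ a b, (r a, sr b) ∉ G := fun a b h =>
    map_sr_ne_of_pow_odd_eq_one hm hβ hn (by rw [← map_pow, r_pow_self, map_one]) b
      ((hG _).1 h).symm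
  have hsr : ∀ a b, (sr a, r b) ∉ G := fun a b h =>
    map_sr_ne_of_pow_odd_eq_one hn hα hm (by rw [← map_pow, r_pow_self, map_one]) a ((hG _).1 h)
  obtain ⟨b | b₀, hb₀⟩ := hβ (α (sr 0))
  · exact absurd ((hG _).2 hb₀.symm) (hsr 0 b)
  exact .inr ⟨_, nonempty_mulEquiv_generalizedDihedral ((hG _).2 hb₀.symm) hrs hsr⟩

/-- Let `n, m ≥ 3` be odd and let `G = Dₙ ×_Q Dₘ` be a fibre product of the dihedral groups
`Dₙ` and `Dₘ` over a common quotient `Q` (via surjections `α`, `β`). Then either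
`G ≅ Dₙ × Dₘ`, or `G` is isomorphic to a generalized dihedral group `D(A)` for some subgroup
`A ≤ Cₙ × Cₘ`. -/
theorem fibre_product_of_odd_dihedrals (n m : ℕ) (hn : Odd n) (hm : Odd m)
    (hn3 : 3 ≤ n) (hm3 : 3 ≤ m) {Q : Type*} [Group Q]
    (α : DihedralGroup n →* Q) (β : DihedralGroup m →* Q)
    (hα : Function.Surjective α) (hβ : Function.Surjective β)
    (G : Subgroup (DihedralGroup n × DihedralGroup m))
    (hG : ∀ p : DihedralGroup n × DihedralGroup m, p ∈ G ↔ α p.1 = β p.2) :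
    Nonempty (G ≃* DihedralGroup n × DihedralGroup m) ∨
    ∃ A : Subgroup (Multiplicative (ZMod n) × Multiplicative (ZMod m)),
      Nonempty (G ≃* GeneralizedDihedral A) :=
  fibre_product_of_odd_dihedrals_general n m hn hm α β hα hβ G hG
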